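/- arXiv:cs/0512001 — 2 statements merged into one kernel-verified Lean document; each statement's English description precedes it below -/
import Mathlib

section
/- Let K be a convex subset of ℝ² with nonempty interior, and let s be a closed line segment in ℝ². If the intersection of s with the frontier (topological boundary) of K is a finite set, then that intersection contains at most 2 points. -/
/-- The Euclidean plane ℝ². -/
abbrev Plane := EuclideanSpace ℝ (Fin 2)

private lemma exists_ordered_triple {T : Set ℝ} {p q r : ℝ} (hp : p ∈ T) (hq : q ∈ T)
    (hr : r ∈ T) (h1 : p ≠ q) (h2 : p ≠ r) (h3 : q ≠ r) :
    ∃ u v w, u ∈ T ∧ v ∈ T ∧ w ∈ T ∧ u < v ∧ v < w := by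
  rcases h1.lt_or_gt with hpq | hpq
  · rcases h3.lt_or_gt with hqr | hqr
    · exact ⟨p, q, r, hp, hq, hr, hpq, hqr⟩
    · rcases h2.lt_or_gt with hpr | hpr
      · exact ⟨p, r, q, hp, hr, hq, hpr, hqr⟩
      · exact ⟨r, p, q, hr, hp, hq, hpr, hpq⟩
  · rcases h2.lt_or_gt with hpr | hpr
    · exact ⟨q, p, r, hq, hp, hr, hpq, hpr⟩
    · rcases h3.lt_or_gt with hqr | hqr
      · exact ⟨q, r, p, hq, hr, hp, hqr, hpr⟩
      · exact ⟨r, q, p, hr, hq, hp, hqr, hpq⟩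

/-- If `K ⊆ ℝ²` is convex with nonempty interior and the closed
segment `[a, b]` meets the frontier of `K` in a finite set, then that
intersection has at most 2 points. -/
theorem segment_inter_frontier_convex_le_two
    (K : Set Plane) (hK : Convex ℝ K) (hKint : (interior K).Nonempty)
    (a b : Plane) (hfin : (segment ℝ a b ∩ frontier K).Finite) :
    (segment ℝ a b ∩ frontier K).ncard ≤ 2 := by
  by_contra h
  push_neg at h
  obtain ⟨x, hx, y, hy, z, hz, hxy, hxz, hyz⟩ := (Set.two_lt_ncard hfin).mp h
  -- a ≠ b
  have hab : a ≠ b := by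
    rintro rfl
    rw [segment_same] at hx hy
    exact hxy (hx.1.trans hy.1.symm)
  set c : ℝ → Plane := fun t => (1 - t) • a + t • b with hc
  have hcinj : Function.Injective c := by
    intro s t hst
    simp only [hc] at hst
    by_contra hne
    apply hab
    have : (t - s) • (a - b) = 0 := by
      have := sub_eq_zero.mpr hst
      rw [← this]
      module
    rcases smul_eq_zero.mp this with h' | h'
    · exact absurd (sub_eq_zero.mp h') (fun e => hne (by linarith [sub_eq_zero.mp h']))
    · exact sub_eq_zero.mp h'
  -- get parameters
  have hseg : segment ℝ a b = c '' Set.Icc (0:ℝ) 1 := segment_eq_image ℝ a b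
  obtain ⟨tx, htx, hcx⟩ := hseg ▸ hx.1
  obtain ⟨ty, hty, hcy⟩ := hseg ▸ hy.1
  obtain ⟨tz, htz, hcz⟩ := hseg ▸ hz.1
  set T : Set ℝ := {t | t ∈ Set.Icc (0:ℝ) 1 ∧ c t ∈ frontier K} with hT
  have hTx : tx ∈ T := ⟨htx, hcx ▸ hx.2⟩
  have hTy : ty ∈ T := ⟨hty, hcy ▸ hy.2⟩
  have hTz : tz ∈ T := ⟨htz, hcz ▸ hz.2⟩
  have hd1 : tx ≠ ty := fun e => hxy (by rw [← hcx, ← hcy, e])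
  have hd2 : tx ≠ tz := fun e => hxz (by rw [← hcx, ← hcz, e])
  have hd3 : ty ≠ tz := fun e => hyz (by rw [← hcy, ← hcz, e])
  obtain ⟨u, v, w, hu, hv, hw, huv, hvw⟩ := exists_ordered_triple hTx hTy hTz hd1 hd2 hd3
  clear hd1 hd2 hd3 hTx hTy hTz hcx hcy hcz hx hy hz hxy hxz hyz htx hty htz
  set X := c u with hX
  set Y := c v with hY
  set Z := c w with hZ
  -- Y is a strict convex combination of X and Z
  have huw : u < w := huv.trans hvw
  have huw' : w - u ≠ 0 := by linarith
  set θ : ℝ := (v - u) / (w - u) with hθ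
  have hθ0 : 0 < θ := div_pos (by linarith) (by linarith)
  have hθ1 : θ < 1 := (div_lt_one (by linarith)).mpr (by linarith)
  have hcombo : Y = (1 - θ) • X + θ • Z := by
    have hkey : θ * (w - u) = v - u := div_mul_cancel₀ _ huw'
    simp only [hY, hX, hZ, hc]
    match_scalars
    · nlinarith [hkey]
    · nlinarith [hkey]
  -- supporting functional at Y
  have hYfr : Y ∈ frontier K := hv.2
  have hXfr : X ∈ frontier K := hu.2
  have hZfr : Z ∈ frontier K := hw.2
  have hXab : X ∈ segment ℝ a b := by rw [hseg]; exact ⟨u, hu.1, rfl⟩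
  have hZab : Z ∈ segment ℝ a b := by rw [hseg]; exact ⟨w, hw.1, rfl⟩
  have hXZ : X ≠ Z := fun e => (ne_of_lt huw) (hcinj e)
  clear_value X Y Z θ
  clear hθ hX hY hZ hu hv hw hseg hcinj huv hvw huw huw' hc hT h
  have hYni : Y ∉ interior K := fun hmem => (hYfr.2 hmem)
  obtain ⟨f, hf⟩ := geometric_hahn_banach_open_point hK.interior isOpen_interior hYni
  -- f ≤ f Y on the closure of K
  obtain ⟨p₀, hp₀⟩ := hKint
  have hle : ∀ p ∈ closure K, f p ≤ f Y := by
    intro p hp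
    have hev : ∀ᶠ t : ℝ in nhdsWithin 0 (Set.Ioi 0),
        f ((1 - t) • p + t • p₀) ≤ f Y := by
      filter_upwards [Ioo_mem_nhdsGT_of_mem (by constructor <;> norm_num :
        (0:ℝ) ∈ Set.Ico 0 1)] with t ht
      exact le_of_lt (hf _ (hK.combo_closure_interior_mem_interior hp hp₀
        (by linarith [ht.1, ht.2]) ht.1 (by ring)))
    have hcont : Continuous (fun t : ℝ => f ((1 - t) • p + t • p₀)) := by fun_prop
    have htend : Filter.Tendsto (fun t : ℝ => f ((1 - t) • p + t • p₀))
        (nhdsWithin 0 (Set.Ioi 0)) (nhds (f p)) := by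
      have := (hcont.tendsto 0).mono_left
        (nhdsWithin_le_nhds : nhdsWithin (0:ℝ) (Set.Ioi 0) ≤ nhds 0)
      simpa using this
    exact le_of_tendsto htend hev
  have hXcl : X ∈ closure K := hXfr.1
  have hZcl : Z ∈ closure K := hZfr.1
  have hfX : f X ≤ f Y := hle _ hXcl
  have hfZ : f Z ≤ f Y := hle _ hZcl
  have hfY : f Y = (1 - θ) * f X + θ * f Z := by
    rw [hcombo]; simp [map_add, map_smul]
  have hfXY : f X = f Y := by nlinarith
  have hfZY : f Z = f Y := by nlinarith
  -- the whole segment X Z lies in the frontier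
  have hsub : segment ℝ X Z ⊆ segment ℝ a b ∩ frontier K := by
    intro p hp
    constructor
    · exact (convex_segment a b).segment_subset hXab hZab hp
    · have hpcl : p ∈ closure K := hK.closure.segment_subset hXcl hZcl hp
      obtain ⟨s, hs, rfl⟩ := (segment_eq_image ℝ X Z) ▸ hp
      have hfp : f ((1 - s) • X + s • Z) = f Y := by
        simp [map_add, map_smul, hfXY, hfZY]; ring
      refine ⟨hpcl, fun hint => ?_⟩
      exact absurd (hf _ hint) (by rw [hfp]; exact lt_irrefl _)
  -- but that segment is infinite
  have hinf : (segment ℝ X Z).Infinite := by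
    rw [segment_eq_image' ℝ X Z]
    apply Set.Infinite.image
    · intro s hs t ht hst
      have : (s - t) • (Z - X) = 0 := by
        have := sub_eq_zero.mpr hst
        rw [← this]; module
      rcases smul_eq_zero.mp this with h' | h'
      · linarith [sub_eq_zero.mp h']
      · exact absurd h' (sub_ne_zero.mpr (Ne.symm hXZ))
    · exact Set.Icc_infinite (by norm_num)
  exact hinf (hfin.subset hsub)
end

section
/- There is no family of 7 triangles in ℝ² whose frontiers pairwise intersect in finitely many points, which forms a Venn diagram, and which is non-simple, i.e. some point of the plane lies on the frontiers of three or more of the triangles. -/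
open scoped BigOperators

/-- A finite set of points is in strictly convex position if no point of it lies in the
convex hull of the others. -/
def StrictConvexPos (S : Finset Plane) : Prop :=
  ∀ p ∈ S, p ∉ convexHull ℝ ((S : Set Plane) \ {p})

/-- `P ⊆ ℝ²` is a convex `k`-gon: the convex hull of `k` points in strictly convex
position. -/
def IsConvexKGon (k : ℕ) (P : Set Plane) : Prop :=
  ∃ S : Finset Plane, S.card = k ∧ StrictConvexPos S ∧ P = convexHull ℝ (S : Set Plane)

/-- The frontiers of the members of the family pairwise intersect in finite sets. -/
def PairwiseFinite {n : ℕ} (C : Fin n → Set Plane) : Prop :=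
  ∀ i j : Fin n, i ≠ j → (frontier (C i) ∩ frontier (C j)).Finite

/-- The family `C` is a Venn diagram: for every choice `X` assigning to each index
either the interior of `Cᵢ` (when `X i = true`) or the complement `ℝ² \ Cᵢ`
(when `X i = false`), the corresponding region is nonempty and connected. -/
def IsVennDiagram {n : ℕ} (C : Fin n → Set Plane) : Prop :=
  ∀ X : Fin n → Bool,
    IsConnected (⋂ i : Fin n, if X i then interior (C i) else (C i)ᶜ)

/-- A Venn diagram is simple if no point lies on the frontiers of three or more of the
curves. -/
def IsSimple {n : ℕ} (C : Fin n → Set Plane) : Prop :=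
  ∀ p : Plane, ({i : Fin n | p ∈ frontier (C i)}).ncard ≤ 2

/-- The vertices of the family: points lying on the frontiers of at least two members. -/
def VennVertices {n : ℕ} (C : Fin n → Set Plane) : Set Plane :=
  {p : Plane | ∃ i j : Fin n, i ≠ j ∧ p ∈ frontier (C i) ∧ p ∈ frontier (C j)}

/-- A triangle: the convex hull of 3 affinely independent points. -/
def IsTriangle (T : Set Plane) : Prop :=
  ∃ p : Fin 3 → Plane, AffineIndependent ℝ p ∧ T = convexHull ℝ (Set.range p)


section VennAux

open Set

/-- A chain of nonempty proper subsets of `B` has at most `B.card - 1` members. -/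
lemma chain_card_aux {α : Type*} [DecidableEq α] (B : Finset α) (𝒜 : Finset (Finset α))
    (h1 : ∀ A ∈ 𝒜, A ⊆ B ∧ A.Nonempty ∧ A ≠ B)
    (h2 : ∀ A ∈ 𝒜, ∀ A' ∈ 𝒜, A ⊆ A' ∨ A' ⊆ A) :
    𝒜.card ≤ B.card - 1 := by
  classical
  have hinj : Set.InjOn Finset.card (𝒜 : Set (Finset α)) := by
    intro A hA A' hA' hcard
    rcases h2 A hA A' hA' with h | h
    · exact Finset.eq_of_subset_of_card_le h hcard.ge
    · exact (Finset.eq_of_subset_of_card_le h hcard.le).symm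
  have hmap : ∀ A ∈ 𝒜, A.card ∈ Finset.Ioo 0 B.card := by
    intro A hA
    obtain ⟨hsub, hne, hneq⟩ := h1 A hA
    refine Finset.mem_Ioo.2 ⟨Finset.card_pos.2 hne, Finset.card_lt_card ⟨hsub, fun h => hneq (Finset.Subset.antisymm hsub h)⟩⟩
  calc 𝒜.card ≤ (Finset.Ioo 0 B.card).card := Finset.card_le_card_of_injOn _ hmap hinj
    _ = B.card - 1 := by rw [Nat.card_Ioo]; omega


section SegFrontier
variable {E : Type*} [NormedAddCommGroup E] [NormedSpace ℝ E]

private lemma lineMap_mem_openSegment' {a b : E} {α β γ : ℝ} (h1 : α < β) (h2 : β < γ) :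
    a + β • (b - a) ∈ openSegment ℝ (a + α • (b - a)) (a + γ • (b - a)) := by
  have hγα : (0:ℝ) < γ - α := by linarith
  have hu0 : 0 < (γ - β) / (γ - α) := div_pos (by linarith) hγα
  have hv0 : 0 < (β - α) / (γ - α) := div_pos (by linarith) hγα
  have huv : (γ - β) / (γ - α) + (β - α) / (γ - α) = 1 := by
    have h3 : γ - β + (β - α) = γ - α := by ring
    rw [← add_div, h3, div_self hγα.ne']
  have hβ : (γ - β) / (γ - α) * α + (β - α) / (γ - α) * γ = β := by
    field_simp
    ring
  refine ⟨(γ - β) / (γ - α), (β - α) / (γ - α), hu0, hv0, huv, ?_⟩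
  have hexp : ((γ - β) / (γ - α)) • (a + α • (b - a)) + ((β - α) / (γ - α)) • (a + γ • (b - a))
      = ((γ - β) / (γ - α) + (β - α) / (γ - α)) • a
        + ((γ - β) / (γ - α) * α + (β - α) / (γ - α) * γ) • (b - a) := by
    simp only [smul_add, smul_smul, add_smul]; abel
  rw [hexp, huv, hβ, one_smul]

lemma seg_frontier_ncard_le_two {K : Set E} (hK : Convex ℝ K) (hKc : IsClosed K) {a b : E}
    (hfin : (segment ℝ a b ∩ frontier K).Finite) :
    (segment ℝ a b ∩ frontier K).ncard ≤ 2 := by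
  rcases eq_or_ne a b with rfl | hab
  · have : segment ℝ a a ∩ frontier K ⊆ {a} := by
      rw [segment_same]; exact inter_subset_left
    calc (segment ℝ a a ∩ frontier K).ncard ≤ ({a} : Set E).ncard :=
          Set.ncard_le_ncard this (finite_singleton a)
      _ ≤ 2 := by simp
  set L : ℝ → E := fun θ => a + θ • (b - a) with hL
  have hLinj : Function.Injective L := by
    intro θ₁ θ₂ h
    have : θ₁ • (b - a) = θ₂ • (b - a) := by
      have := h; simp only [hL, add_right_injective] at this; exact add_left_cancel this
    have hba : b - a ≠ 0 := sub_ne_zero.2 (Ne.symm hab)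
    exact smul_left_injective ℝ hba this
  set S' : Set ℝ := {θ | θ ∈ Icc (0:ℝ) 1 ∧ L θ ∈ frontier K} with hS'
  have hsub : segment ℝ a b ∩ frontier K ⊆ L '' S' := by
    rintro x ⟨hxseg, hxfr⟩
    rw [segment_eq_image' ℝ a b] at hxseg
    obtain ⟨θ, hθ, rfl⟩ := hxseg
    exact ⟨θ, ⟨hθ, hxfr⟩, rfl⟩
  have hS'sub : S' ⊆ L ⁻¹' (segment ℝ a b ∩ frontier K) := by
    rintro θ ⟨hθ, hfr⟩
    refine ⟨?_, hfr⟩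
    rw [segment_eq_image' ℝ a b]; exact ⟨θ, hθ, rfl⟩
  have hS'fin : S'.Finite :=
    (hfin.preimage (hLinj.injOn)).subset hS'sub
  have hfrK : ∀ x, x ∈ frontier K → x ∈ K ∧ x ∉ interior K := by
    intro x hx
    rw [hKc.frontier_eq] at hx
    exact ⟨hx.1, hx.2⟩
  -- main claim
  have hmain : S'.ncard ≤ 2 := by
    rcases S'.eq_empty_or_nonempty with he | hne
    · simp [he]
    have hbddb : BddBelow S' := hS'fin.bddBelow
    have hbdda : BddAbove S' := hS'fin.bddAbove
    set m := sInf S' with hm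
    set M := sSup S' with hMdef
    have hmS : m ∈ S' := hne.csInf_mem hS'fin
    have hMS : M ∈ S' := hne.csSup_mem hS'fin
    have hkey : S' ⊆ {m, M} := by
      intro θ hθS
      by_contra hne2
      simp only [Set.mem_insert_iff, Set.mem_singleton_iff] at hne2
      push_neg at hne2
      obtain ⟨hθm, hθM⟩ := hne2
      have h1 : m < θ := lt_of_le_of_ne (csInf_le hbddb hθS) (Ne.symm hθm)
      have h2 : θ < M := lt_of_le_of_ne (le_csSup hbdda hθS) hθM
      by_cases hA : ∃ σ ∈ Ioo m M, L σ ∈ interior K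
      · obtain ⟨σ, hσIoo, hσint⟩ := hA
        have hθint : L θ ∈ interior K := by
          rcases lt_trichotomy θ σ with hlt | heq | hgt
          · -- θ between m and σ
            have : L θ ∈ openSegment ℝ (L m) (L σ) := lineMap_mem_openSegment' h1 hlt
            rw [openSegment_symm] at this
            exact hK.openSegment_interior_closure_subset_interior hσint
              (subset_closure ((hfrK _ hmS.2).1)) this
          · exact heq ▸ hσint
          · have : L θ ∈ openSegment ℝ (L σ) (L M) := lineMap_mem_openSegment' hgt h2
            exact hK.openSegment_interior_closure_subset_interior hσint
              (subset_closure ((hfrK _ hMS.2).1)) this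
        exact (hfrK _ hθS.2).2 hθint
      · push_neg at hA
        have hIooSub : Ioo m M ⊆ S' := by
          intro σ hσ
          have hσIcc : σ ∈ Icc (0:ℝ) 1 := ⟨le_trans hmS.1.1 hσ.1.le, le_trans hσ.2.le hMS.1.2⟩
          have hσK : L σ ∈ K := by
            have : L σ ∈ openSegment ℝ (L m) (L M) := lineMap_mem_openSegment' hσ.1 hσ.2
            exact hK.openSegment_subset (hfrK _ hmS.2).1 (hfrK _ hMS.2).1 this
          have : L σ ∈ frontier K := by
            rw [hKc.frontier_eq]
            exact ⟨hσK, hA σ hσ⟩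
          exact ⟨hσIcc, this⟩
        exact (Set.Ioo_infinite (lt_trans h1 h2)) (hS'fin.subset hIooSub)
    calc S'.ncard ≤ ({m, M} : Set ℝ).ncard := Set.ncard_le_ncard hkey (by
          exact (finite_singleton M).insert m)
      _ ≤ 2 := Set.ncard_insert_le m {M} |>.trans (by simp)
  calc (segment ℝ a b ∩ frontier K).ncard ≤ (L '' S').ncard :=
        Set.ncard_le_ncard hsub (hS'fin.image L)
    _ ≤ S'.ncard := Set.ncard_image_le hS'fin
    _ ≤ 2 := hmain

end SegFrontier

lemma triangle_basis {p : Fin 3 → Plane} (hp : AffineIndependent ℝ p) :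
    ∃ b : AffineBasis (Fin 3) ℝ Plane, ⇑b = p := by
  have htop : affineSpan ℝ (Set.range p) = ⊤ := by
    rw [hp.affineSpan_eq_top_iff_card_eq_finrank_add_one]
    simp [finrank_euclideanSpace_fin]
  exact ⟨⟨p, hp, htop⟩, rfl⟩

lemma triangle_frontier {p : Fin 3 → Plane} (hp : AffineIndependent ℝ p) :
    frontier (convexHull ℝ (Set.range p)) =
      segment ℝ (p 0) (p 1) ∪ segment ℝ (p 0) (p 2) ∪ segment ℝ (p 1) (p 2) := by
  obtain ⟨b, hb⟩ := triangle_basis hp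
  have hcl : IsClosed (convexHull ℝ (Set.range p)) :=
    ((Set.finite_range p).isCompact_convexHull ℝ).isClosed
  have hrange : Set.range ⇑b = Set.range p := by rw [hb]
  have hhull : convexHull ℝ (Set.range p) = {x | ∀ i, 0 ≤ b.coord i x} := by
    rw [← hrange, b.convexHull_eq_nonneg_coord]
  have hint : interior (convexHull ℝ (Set.range p)) = {x | ∀ i, 0 < b.coord i x} := by
    rw [← hrange, b.interior_convexHull]
  have hcoord : ∀ i j : Fin 3, b.coord i (p j) = if i = j then 1 else 0 := by
    intro i j
    rw [← hb]
    simp [AffineBasis.coord_apply]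
  -- the three "edge" inclusions into the frontier
  have hedge : ∀ (i j k : Fin 3), k ≠ i → k ≠ j →
      segment ℝ (p i) (p j) ⊆ frontier (convexHull ℝ (Set.range p)) := by
    intro i j k hki hkj x hx
    have hxT : x ∈ convexHull ℝ (Set.range p) :=
      (convex_convexHull ℝ _).segment_subset
        (subset_convexHull ℝ _ (mem_range_self i)) (subset_convexHull ℝ _ (mem_range_self j)) hx
    have hcoordk : b.coord k x = 0 := by
      have himg : b.coord k x ∈ segment ℝ (b.coord k (p i)) (b.coord k (p j)) :=
        image_segment ℝ (b.coord k) (p i) (p j) ▸ Set.mem_image_of_mem _ hx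
      rw [hcoord k i, hcoord k j, if_neg hki, if_neg hkj, segment_same] at himg
      exact himg
    rw [hcl.frontier_eq]
    refine ⟨hxT, ?_⟩
    rw [hint]
    intro hall
    exact (hall k).ne' hcoordk
  rw [subset_antisymm_iff]
  constructor
  · intro x hx
    rw [hcl.frontier_eq] at hx
    obtain ⟨hxT, hxni⟩ := hx
    have hnn : ∀ i, 0 ≤ b.coord i x := by rwa [hhull] at hxT
    have hex : ∃ k, b.coord k x = 0 := by
      rw [hint] at hxni
      by_contra hc
      push_neg at hc
      exact hxni fun i => lt_of_le_of_ne (hnn i) (Ne.symm (hc i))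
    obtain ⟨k, hk⟩ := hex
    have hsum : b.coord 0 x + b.coord 1 x + b.coord 2 x = 1 := by
      have := b.sum_coord_apply_eq_one x
      rwa [Fin.sum_univ_three] at this
    have hrep : b.coord 0 x • p 0 + b.coord 1 x • p 1 + b.coord 2 x • p 2 = x := by
      have := b.linear_combination_coord_eq_self x
      rw [Fin.sum_univ_three] at this
      rwa [hb] at this
    fin_cases k
    · -- coord 0 = 0 : x ∈ segment p1 p2
      have hk' : b.coord 0 x = 0 := hk
      refine Or.inr ⟨b.coord 1 x, b.coord 2 x, hnn 1, hnn 2, ?_, ?_⟩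
      · rw [hk'] at hsum; linarith
      · rw [hk'] at hrep; simpa using hrep
    · have hk' : b.coord 1 x = 0 := hk
      refine Or.inl (Or.inr ⟨b.coord 0 x, b.coord 2 x, hnn 0, hnn 2, ?_, ?_⟩)
      · rw [hk'] at hsum; linarith
      · rw [hk'] at hrep; simpa using hrep
    · have hk' : b.coord 2 x = 0 := hk
      refine Or.inl (Or.inl ⟨b.coord 0 x, b.coord 1 x, hnn 0, hnn 1, ?_, ?_⟩)
      · rw [hk'] at hsum; linarith
      · rw [hk'] at hrep; simpa using hrep
  · refine union_subset (union_subset ?_ ?_) ?_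
    · exact hedge 0 1 2 (by decide) (by decide)
    · exact hedge 0 2 1 (by decide) (by decide)
    · exact hedge 1 2 0 (by decide) (by decide)


lemma pair_frontier_ncard_le_six {T₁ T₂ : Set Plane} (h₁ : IsTriangle T₁) (h₂ : IsTriangle T₂)
    (hfin : (frontier T₁ ∩ frontier T₂).Finite) :
    (frontier T₁ ∩ frontier T₂).ncard ≤ 6 := by
  obtain ⟨p, hp, rfl⟩ := h₂
  obtain ⟨p1, hp1, rfl⟩ := h₁
  have hKconv : Convex ℝ (convexHull ℝ (Set.range p1)) := convex_convexHull ℝ _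
  have hKcl : IsClosed (convexHull ℝ (Set.range p1)) :=
    ((Set.finite_range p1).isCompact_convexHull ℝ).isClosed
  have hseg : ∀ a b : Plane, segment ℝ a b ⊆ frontier (convexHull ℝ (Set.range p)) →
      (frontier (convexHull ℝ (Set.range p1)) ∩ segment ℝ a b).ncard ≤ 2 := by
    intro a b hsub
    have hfin' : (segment ℝ a b ∩ frontier (convexHull ℝ (Set.range p1))).Finite := by
      apply hfin.subset
      rintro x ⟨hx1, hx2⟩
      exact ⟨hx2, hsub hx1⟩
    rw [inter_comm]
    exact seg_frontier_ncard_le_two hKconv hKcl hfin'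
  rw [triangle_frontier hp, inter_union_distrib_left, inter_union_distrib_left]
  have hfr := triangle_frontier hp
  refine le_trans (Set.ncard_union_le _ _) ?_
  have h12 := Set.ncard_union_le (frontier (convexHull ℝ (Set.range p1)) ∩ segment ℝ (p 0) (p 1))
    (frontier (convexHull ℝ (Set.range p1)) ∩ segment ℝ (p 0) (p 2))
  have e1 := hseg (p 0) (p 1) (by rw [hfr]; exact fun x hx => Or.inl (Or.inl hx))
  have e2 := hseg (p 0) (p 2) (by rw [hfr]; exact fun x hx => Or.inl (Or.inr hx))
  have e3 := hseg (p 1) (p 2) (by rw [hfr]; exact fun x hx => Or.inr hx)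
  omega


noncomputable def dir (t : ℝ) : Plane := WithLp.toLp 2 ![Real.cos t, Real.sin t]

lemma dir_apply_zero (t : ℝ) : dir t 0 = Real.cos t := rfl
lemma dir_apply_one (t : ℝ) : dir t 1 = Real.sin t := rfl

lemma dir_norm (t : ℝ) : ‖dir t‖ = 1 := by
  rw [EuclideanSpace.norm_eq]
  rw [Fin.sum_univ_two]
  rw [dir_apply_zero, dir_apply_one]
  simp only [Real.norm_eq_abs, sq_abs]
  rw [Real.cos_sq_add_sin_sq]
  exact Real.sqrt_one

lemma dir_ne_zero (t : ℝ) : dir t ≠ 0 := by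
  intro h
  have := dir_norm t
  rw [h] at this
  simp at this

lemma dir_continuous : Continuous dir := by
  show Continuous fun t => (EuclideanSpace.equiv (Fin 2) ℝ).symm ![Real.cos t, Real.sin t]
  refine (EuclideanSpace.equiv (Fin 2) ℝ).symm.continuous.comp ?_
  refine continuous_pi ?_
  intro i
  fin_cases i
  · simpa using Real.continuous_cos
  · simpa using Real.continuous_sin

lemma dir_surj (u : Plane) (hu : ‖u‖ = 1) : ∃ t, dir t = u := by
  have hsum : (u 0) ^ 2 + (u 1) ^ 2 = 1 := by
    have := hu
    rw [EuclideanSpace.norm_eq, Fin.sum_univ_two] at this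
    have h2 : Real.sqrt (‖u 0‖ ^ 2 + ‖u 1‖ ^ 2) = 1 := this
    have h3 : ‖u 0‖ ^ 2 + ‖u 1‖ ^ 2 = 1 := by
      have hnn : (0:ℝ) ≤ ‖u 0‖ ^ 2 + ‖u 1‖ ^ 2 := by positivity
      nlinarith [Real.sq_sqrt hnn]
    simpa [Real.norm_eq_abs, sq_abs] using h3
  have ha1 : -1 ≤ u 0 := by nlinarith
  have ha2 : u 0 ≤ 1 := by nlinarith
  have hcos : Real.cos (Real.arccos (u 0)) = u 0 := Real.cos_arccos ha1 ha2
  have hsin : Real.sin (Real.arccos (u 0)) = Real.sqrt (1 - (u 0)^2) := Real.sin_arccos (u 0)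
  have hsqrt : Real.sqrt (1 - (u 0)^2) = |u 1| := by
    rw [show (1 : ℝ) - (u 0)^2 = (u 1)^2 by linarith]
    exact Real.sqrt_sq_eq_abs _
  rcases le_or_gt 0 (u 1) with hb | hb
  · refine ⟨Real.arccos (u 0), ?_⟩
    ext i
    fin_cases i
    · show Real.cos _ = u 0; rw [hcos]
    · show Real.sin _ = u 1; rw [hsin, hsqrt, abs_of_nonneg hb]
  · refine ⟨-Real.arccos (u 0), ?_⟩
    ext i
    fin_cases i
    · show Real.cos _ = u 0; rw [Real.cos_neg, hcos]
    · show Real.sin _ = u 1; rw [Real.sin_neg, hsin, hsqrt, abs_of_neg hb]; ring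

lemma dir_eq_angle {t t' : ℝ} (h : dir t = dir t') : ∃ k : ℤ, t' = t + k * (2 * Real.pi) := by
  have hc : Real.cos t = Real.cos t' := congrFun (congrArg WithLp.ofLp h) 0
  have hs : Real.sin t = Real.sin t' := congrFun (congrArg WithLp.ofLp h) 1
  have hexp : Complex.exp (t * Complex.I) = Complex.exp (t' * Complex.I) := by
    rw [Complex.exp_mul_I, Complex.exp_mul_I]
    rw [← Complex.ofReal_cos, ← Complex.ofReal_sin, ← Complex.ofReal_cos,
      ← Complex.ofReal_sin, hc, hs]
  rw [Complex.exp_eq_exp_iff_exists_int] at hexp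
  obtain ⟨n, hn⟩ := hexp
  refine ⟨-n, ?_⟩
  have : (t : ℂ) = t' + n * (2 * Real.pi) := by
    have h2 : (t : ℂ) * Complex.I = (↑t' + ↑n * (2 * ↑Real.pi)) * Complex.I := by
      rw [hn]; ring
    exact mul_right_cancel₀ Complex.I_ne_zero h2
  have : t = t' + n * (2 * Real.pi) := by exact_mod_cast this
  push_cast
  linarith

lemma dir_periodic (t : ℝ) (k : ℤ) : dir (t + k * (2 * Real.pi)) = dir t := by
  ext i
  fin_cases i
  · show Real.cos _ = Real.cos t; exact Real.cos_add_int_mul_two_pi t k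
  · show Real.sin _ = Real.sin t; exact Real.sin_add_int_mul_two_pi t k


lemma gauge_package {C : Set Plane} (hconv : Convex ℝ C) (hcomp : IsCompact C) {q : Plane}
    (hq : q ∈ interior C) :
    (∀ y, (q + y ∈ interior C ↔ gauge ((fun z => q + z) ⁻¹' C) y < 1)) ∧
    (∀ y, (q + y ∈ C ↔ gauge ((fun z => q + z) ⁻¹' C) y ≤ 1)) ∧
    (∀ y, (q + y ∈ frontier C ↔ gauge ((fun z => q + z) ⁻¹' C) y = 1)) ∧
    (∀ y, y ≠ 0 → 0 < gauge ((fun z => q + z) ⁻¹' C) y) ∧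
    Continuous (gauge ((fun z => q + z) ⁻¹' C)) ∧
    (∀ (r : ℝ) y, 0 ≤ r → gauge ((fun z => q + z) ⁻¹' C) (r • y)
      = r * gauge ((fun z => q + z) ⁻¹' C) y) := by
  set s : Set Plane := (fun z => q + z) ⁻¹' C with hs
  have hhom : s = (Homeomorph.addLeft q) ⁻¹' C := rfl
  have hsconv : Convex ℝ s := by
    have himg : s = (fun z => -q + z) '' C := by
      ext x
      constructor
      · intro hx; exact ⟨q + x, hx, neg_add_cancel_left q x⟩
      · rintro ⟨c, hc, rfl⟩; show q + (-q + c) ∈ C; rwa [show q + (-q + c) = c from add_neg_cancel_left q c]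
    rw [himg]
    exact hconv.translate _
  have hCcl : IsClosed C := hcomp.isClosed
  have hint : interior s = (fun z => q + z) ⁻¹' interior C := by
    rw [hhom]
    show interior (⇑(Homeomorph.addLeft q) ⁻¹' C) = ⇑(Homeomorph.addLeft q) ⁻¹' interior C
    exact ((Homeomorph.addLeft q).preimage_interior C).symm
  have hfr : frontier s = (fun z => q + z) ⁻¹' frontier C := by
    rw [hhom]
    show frontier (⇑(Homeomorph.addLeft q) ⁻¹' C) = ⇑(Homeomorph.addLeft q) ⁻¹' frontier C
    exact ((Homeomorph.addLeft q).preimage_frontier C).symm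
  have hclos : closure s = (fun z => q + z) ⁻¹' C := by
    rw [hhom]
    show closure (⇑(Homeomorph.addLeft q) ⁻¹' C) = ⇑(Homeomorph.addLeft q) ⁻¹' C
    rw [← (Homeomorph.addLeft q).preimage_closure C, hCcl.closure_eq]
  have hnhds : s ∈ nhds (0 : Plane) := by
    rw [← mem_interior_iff_mem_nhds, hint]
    show q + 0 ∈ interior C
    rwa [add_zero]
  have hbdd : Bornology.IsVonNBounded ℝ s := by
    rw [NormedSpace.isVonNBounded_iff]
    have himg : s = (fun z => -q + z) '' C := by
      ext x
      constructor
      · intro hx; exact ⟨q + x, hx, neg_add_cancel_left q x⟩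
      · rintro ⟨c, hc, rfl⟩; show q + (-q + c) ∈ C; rwa [show q + (-q + c) = c from add_neg_cancel_left q c]
    rw [himg]
    exact ((isometry_add_left (-q)).lipschitz.isBounded_image hcomp.isBounded)
  have habs : Absorbent ℝ s := absorbent_nhds_zero hnhds
  refine ⟨?_, ?_, ?_, ?_, ?_, ?_⟩
  · intro y
    constructor
    · intro h; rw [gauge_lt_one_iff_mem_interior hsconv hnhds, hint]; exact h
    · intro h; rw [gauge_lt_one_iff_mem_interior hsconv hnhds, hint] at h; exact h
  · intro y
    constructor
    · intro h; rw [gauge_le_one_iff_mem_closure hsconv hnhds, hclos]; exact h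
    · intro h; rw [gauge_le_one_iff_mem_closure hsconv hnhds, hclos] at h; exact h
  · intro y
    constructor
    · intro h; rw [gauge_eq_one_iff_mem_frontier hsconv hnhds, hfr]; exact h
    · intro h; rw [gauge_eq_one_iff_mem_frontier hsconv hnhds, hfr] at h; exact h
  · intro y hy
    exact (gauge_pos habs hbdd).2 hy
  · exact continuous_gauge hsconv hnhds
  · intro r y hr
    rw [gauge_smul_of_nonneg hr]
    simp


end VennAux

/-- There is no non-simple Venn diagram of seven triangles: no family
of 7 triangles with pairwise finitely intersecting frontiers that forms a Venn diagram
and has some point lying on the frontiers of three or more of the triangles. -/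
theorem no_nonsimple_venn_seven_triangles :
    ¬ ∃ C : Fin 7 → Set Plane,
      (∀ i, IsTriangle (C i)) ∧ PairwiseFinite C ∧ IsVennDiagram C ∧
      ∃ p : Plane, 3 ≤ ({i : Fin 7 | p ∈ frontier (C i)}).ncard := by
  rintro ⟨C, hTri, hPF, hVenn, p, hp3⟩
  classical
  have hconv : ∀ i, Convex ℝ (C i) := fun i => by
    obtain ⟨pp, hpp, hE⟩ := hTri i; rw [hE]; exact convex_convexHull ℝ _
  have hcomp : ∀ i, IsCompact (C i) := fun i => by
    obtain ⟨pp, hpp, hE⟩ := hTri i; rw [hE]; exact (Set.finite_range pp).isCompact_convexHull ℝ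
  obtain ⟨q, hq⟩ : ∃ q : Plane, ∀ i, q ∈ interior (C i) := by
    obtain ⟨x, hx⟩ := (hVenn (fun _ => true)).nonempty
    rw [Set.mem_iInter] at hx
    exact ⟨x, fun i => by simpa using hx i⟩
  set g : Fin 7 → Plane → ℝ := fun i => gauge ((fun z => q + z) ⁻¹' (C i)) with hg
  have hpack := fun i => gauge_package (hconv i) (hcomp i) (hq i)
  have hint : ∀ i y, (q + y ∈ interior (C i) ↔ g i y < 1) := fun i => (hpack i).1
  have hmem : ∀ i y, (q + y ∈ C i ↔ g i y ≤ 1) := fun i => (hpack i).2.1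
  have hfr : ∀ i y, (q + y ∈ frontier (C i) ↔ g i y = 1) := fun i => (hpack i).2.2.1
  have hpos : ∀ i y, y ≠ 0 → 0 < g i y := fun i => (hpack i).2.2.2.1
  have hcont : ∀ i, Continuous (g i) := fun i => (hpack i).2.2.2.2.1
  have hsmul : ∀ i (r : ℝ) y, 0 ≤ r → g i (r • y) = r * g i y := fun i => (hpack i).2.2.2.2.2
  set h : Fin 7 → ℝ → ℝ := fun i t => g i (dir t) with hh
  have hhcont : ∀ i, Continuous (h i) := fun i => (hcont i).comp dir_continuous
  have hhpos : ∀ i t, 0 < h i t := fun i t => hpos i _ (dir_ne_zero t)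
  have hhper : ∀ i t (k : ℤ), h i (t + k * (2 * Real.pi)) = h i t := by
    intro i t k
    show g i (dir _) = g i (dir t)
    rw [dir_periodic]
  have hparam : ∀ x : Plane, x ≠ q → ∃ (t ρ : ℝ), 0 < ρ ∧
      (∀ i, (x ∈ interior (C i) ↔ ρ * h i t < 1) ∧ (x ∈ C i ↔ ρ * h i t ≤ 1)) := by
    intro x hx
    set ρ := ‖x - q‖ with hρ
    have hρ0 : 0 < ρ := by rw [hρ, norm_pos_iff, sub_ne_zero]; exact hx
    obtain ⟨t, ht⟩ := dir_surj (ρ⁻¹ • (x - q)) (by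
      rw [norm_smul, Real.norm_eq_abs, abs_of_pos (inv_pos.2 hρ0), ← hρ]
      field_simp)
    have hxq : x = q + ρ • dir t := by
      rw [ht, smul_inv_smul₀ hρ0.ne']
      abel
    refine ⟨t, ρ, hρ0, fun i => ⟨?_, ?_⟩⟩
    · rw [hxq, hint i, hsmul i ρ _ hρ0.le]
    · rw [hxq, hmem i, hsmul i ρ _ hρ0.le]
  have hregion : ∀ S : Finset (Fin 7), ∃ x : Plane,
      (∀ i ∈ S, x ∈ interior (C i)) ∧ ∀ j, j ∉ S → x ∉ C j := by
    intro S
    obtain ⟨x, hx⟩ := (hVenn (fun i => decide (i ∈ S))).nonempty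
    rw [Set.mem_iInter] at hx
    refine ⟨x, fun i hi => ?_, fun j hj => ?_⟩
    · have := hx i
      simp only [hi, decide_eq_true_eq, if_pos] at this
      simpa [hi] using this
    · have := hx j
      simpa [hj] using this
  have hRz : ∀ S : Finset (Fin 7), S ≠ Finset.univ →
      ∃ t, ∀ i ∈ S, ∀ j, j ∉ S → h i t < h j t := by
    intro S hSu
    obtain ⟨x, hx1, hx2⟩ := hregion S
    obtain ⟨j₀, hj₀⟩ : ∃ j, j ∉ S := by
      by_contra hc
      push_neg at hc
      exact hSu (Finset.eq_univ_iff_forall.2 hc)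
    have hxq : x ≠ q := fun he => hx2 j₀ hj₀ (he ▸ interior_subset (hq j₀))
    obtain ⟨t, ρ, hρ0, hchar⟩ := hparam x hxq
    refine ⟨t, fun i hi j hj => ?_⟩
    have h1 : ρ * h i t < 1 := (hchar i).1.1 (hx1 i hi)
    have h2 : ¬(ρ * h j t ≤ 1) := fun hle => hx2 j hj ((hchar j).2.2 hle)
    push_neg at h2
    exact lt_of_mul_lt_mul_left (h1.trans h2) hρ0.le
  have hNp : ∀ S : Finset (Fin 7), ∀ i₀ ∈ S, ∀ j₀, j₀ ∉ S →
      ∃ t, ¬(∀ i ∈ S, ∀ j, j ∉ S → h i t < h j t) := by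
    intro S i₀ hi₀ j₀ hj₀
    obtain ⟨x, hx1, hx2⟩ := hregion {j₀}
    have hij : i₀ ≠ j₀ := fun he => hj₀ (he ▸ hi₀)
    have hxint : x ∈ interior (C j₀) := hx1 j₀ (Finset.mem_singleton_self j₀)
    have hxnot : x ∉ C i₀ := hx2 i₀ (by simp [hij])
    have hxq : x ≠ q := fun he => hxnot (he ▸ interior_subset (hq i₀))
    obtain ⟨t, ρ, hρ0, hchar⟩ := hparam x hxq
    refine ⟨t, fun hRzt => ?_⟩
    have h1 : ρ * h j₀ t < 1 := (hchar j₀).1.1 hxint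
    have h2 : ¬(ρ * h i₀ t ≤ 1) := fun hle => hxnot ((hchar i₀).2.2 hle)
    push_neg at h2
    have h3 : h j₀ t < h i₀ t := lt_of_mul_lt_mul_left (h1.trans h2) hρ0.le
    have h4 := hRzt i₀ hi₀ j₀ hj₀
    linarith
  have hβ : ∀ S : Finset (Fin 7), S.Nonempty → S ≠ Finset.univ → ∃ (β c t₀ : ℝ),
      0 < c ∧ t₀ < β ∧
      (∀ t, t₀ ≤ t → t < β → ∀ i ∈ S, ∀ j, j ∉ S → h i t < h j t) ∧
      (∀ i ∈ S, h i β ≤ c) ∧ (∃ i ∈ S, h i β = c) ∧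
      (∀ j, j ∉ S → c ≤ h j β) ∧ (∃ j, j ∉ S ∧ h j β = c) := by
    intro S hSne hSu
    obtain ⟨t₀, ht₀⟩ := hRz S hSu
    obtain ⟨i₀, hi₀⟩ := id hSne
    obtain ⟨j₀, hj₀⟩ : ∃ j, j ∉ S := by
      by_contra hc
      push_neg at hc
      exact hSu (Finset.eq_univ_iff_forall.2 hc)
    obtain ⟨t₁, ht₁⟩ := hNp S i₀ hi₀ j₀ hj₀
    have hπ : (0:ℝ) < 2 * Real.pi := by positivity
    obtain ⟨k, hk⟩ := exists_int_gt ((t₀ - t₁) / (2 * Real.pi))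
    have ht₁' : t₀ < t₁ + k * (2 * Real.pi) := by
      have := (div_lt_iff₀ hπ).1 hk
      linarith
    have ht₁'' : ¬(∀ i ∈ S, ∀ j, j ∉ S → h i (t₁ + k * (2 * Real.pi)) < h j (t₁ + k * (2 * Real.pi))) := by
      intro hr
      exact ht₁ (fun i hi j hj => by
        have := hr i hi j hj
        rwa [hhper, hhper] at this)
    set F : Set ℝ := {t | t₀ ≤ t ∧ ¬(∀ i ∈ S, ∀ j, j ∉ S → h i t < h j t)} with hF
    have hΘopen : IsOpen {t | ∀ i ∈ S, ∀ j, j ∉ S → h i t < h j t} := by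
      have hEq : {t | ∀ i ∈ S, ∀ j, j ∉ S → h i t < h j t}
          = ⋂ i ∈ (S : Set (Fin 7)), ⋂ j ∈ ((Sᶜ : Finset (Fin 7)) : Set (Fin 7)),
            {t | h i t < h j t} := by
        ext t
        simp only [Set.mem_setOf_eq, Set.mem_iInter, Finset.mem_coe, Finset.mem_compl]
      rw [hEq]
      exact S.finite_toSet.isOpen_biInter fun i _ =>
        (Sᶜ : Finset (Fin 7)).finite_toSet.isOpen_biInter fun j _ =>
          isOpen_lt (hhcont i) (hhcont j)
    have hFclosed : IsClosed F := by
      have : F = Set.Ici t₀ ∩ {t | ∀ i ∈ S, ∀ j, j ∉ S → h i t < h j t}ᶜ := by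
        ext t
        simp [hF, Set.mem_Ici]
      rw [this]
      exact isClosed_Ici.inter hΘopen.isClosed_compl
    have hFne : F.Nonempty := ⟨t₁ + k * (2 * Real.pi), ht₁'.le, ht₁''⟩
    have hFbdd : BddBelow F := ⟨t₀, fun t ht => ht.1⟩
    set β := sInf F with hβdef
    have hβF : β ∈ F := hFclosed.csInf_mem hFne hFbdd
    have hβgt : t₀ < β := by
      refine lt_of_le_of_ne (le_csInf hFne fun t ht => ht.1) fun he => hβF.2 ?_
      rw [← he]
      exact ht₀
    have hIco : ∀ t, t₀ ≤ t → t < β → ∀ i ∈ S, ∀ j, j ∉ S → h i t < h j t := by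
      intro t htt htb
      by_contra hc
      exact absurd (csInf_le hFbdd ⟨htt, hc⟩) (not_le.2 htb)
    have hle : ∀ i ∈ S, ∀ j, j ∉ S → h i β ≤ h j β := by
      intro i hi j hj
      have hsub : Set.Ico t₀ β ⊆ {t | h i t ≤ h j t} := fun t ht =>
        (hIco t ht.1 ht.2 i hi j hj).le
      have hcl : IsClosed {t | h i t ≤ h j t} := isClosed_le (hhcont i) (hhcont j)
      have hβcl : β ∈ closure (Set.Ico t₀ β) := by
        rw [closure_Ico hβgt.ne]
        exact ⟨hβgt.le, le_refl β⟩
      exact hcl.closure_subset_iff.2 hsub hβcl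
    set c := S.sup' hSne (fun i => h i β) with hc
    have hcmax : ∀ i ∈ S, h i β ≤ c := fun i hi => Finset.le_sup' (fun i => h i β) hi
    obtain ⟨iM, hiM, hiMc⟩ := Finset.exists_mem_eq_sup' hSne (fun i => h i β)
    have hcm : ∀ j, j ∉ S → c ≤ h j β := fun j hj =>
      Finset.sup'_le hSne _ fun i hi => hle i hi j hj
    have hnRzβ := hβF.2
    push_neg at hnRzβ
    obtain ⟨i1, hi1, j1, hj1, hnlt⟩ := hnRzβ
    have hj1c : h j1 β = c := le_antisymm (hnlt.trans (hcmax i1 hi1)) (hcm j1 hj1)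
    have hcpos : 0 < c := lt_of_lt_of_le (hhpos i1 β) (hcmax i1 hi1)
    exact ⟨β, c, t₀, hcpos, hβgt, hIco, hcmax, ⟨iM, hiM, hiMc.symm⟩, hcm, ⟨j1, hj1, hj1c⟩⟩
  -- ===== Counting part =====
  -- the vertex set
  have hVfin : (⋃ ij ∈ (Finset.univ.offDiag : Finset (Fin 7 × Fin 7)),
      (frontier (C ij.1) ∩ frontier (C ij.2))).Finite :=
    Set.Finite.biUnion (Finset.univ.offDiag : Finset (Fin 7 × Fin 7)).finite_toSet
      (fun ij hij => hPF ij.1 ij.2 (Finset.mem_offDiag.1 hij).2.2)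
  set Vfin : Finset Plane := hVfin.toFinset with hVfindef
  have hVmem : ∀ v : Plane, v ∈ Vfin ↔
      ∃ i j : Fin 7, i ≠ j ∧ v ∈ frontier (C i) ∧ v ∈ frontier (C j) := by
    intro v
    rw [hVfindef, Set.Finite.mem_toFinset, Set.mem_iUnion₂]
    constructor
    · rintro ⟨ij, hij, h1, h2⟩
      exact ⟨ij.1, ij.2, (Finset.mem_offDiag.1 hij).2.2, h1, h2⟩
    · rintro ⟨i, j, hij, h1, h2⟩
      exact ⟨(i, j), Finset.mem_offDiag.2 ⟨Finset.mem_univ _, Finset.mem_univ _, hij⟩, h1, h2⟩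
  set tdeg : Plane → ℕ :=
    fun v => (Finset.univ.filter (fun i : Fin 7 => v ∈ frontier (C i))).card with htdeg
  -- the family of intermediate subsets
  set 𝒮 : Finset (Finset (Fin 7)) := Finset.univ \ {∅, Finset.univ} with h𝒮
  have h𝒮mem : ∀ S : Finset (Fin 7), S ∈ 𝒮 ↔ S ≠ ∅ ∧ S ≠ Finset.univ := by
    intro S
    rw [h𝒮, Finset.mem_sdiff]
    simp only [Finset.mem_univ, true_and, Finset.mem_insert, Finset.mem_singleton]
    tauto
  have h𝒮card : 𝒮.card = 126 := by
    rw [h𝒮, Finset.card_sdiff_of_subset (by intro x _; exact Finset.mem_univ x)]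
    have h1 : (Finset.univ : Finset (Finset (Fin 7))).card = 128 := by
      rw [Finset.card_univ, Fintype.card_finset]
      rfl
    have h2 : ({∅, Finset.univ} : Finset (Finset (Fin 7))).card = 2 := by
      rw [Finset.card_insert_of_notMem (by
        rw [Finset.mem_singleton]
        exact fun he => (Finset.univ_nonempty).ne_empty he.symm), Finset.card_singleton]
    rw [h1, h2]
  -- choose sweep data for each intermediate subset
  have hchoice : ∀ S : Finset (Fin 7), S ∈ 𝒮 → ∃ (β c t₀ : ℝ),
      0 < c ∧ t₀ < β ∧
      (∀ t, t₀ ≤ t → t < β → ∀ i ∈ S, ∀ j, j ∉ S → h i t < h j t) ∧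
      (∀ i ∈ S, h i β ≤ c) ∧ (∃ i ∈ S, h i β = c) ∧
      (∀ j, j ∉ S → c ≤ h j β) ∧ (∃ j, j ∉ S ∧ h j β = c) := by
    intro S hS
    obtain ⟨hne, hu⟩ := (h𝒮mem S).1 hS
    exact hβ S (Finset.nonempty_iff_ne_empty.2 hne) hu
  choose! βf cf t0f Hpos Hgt HIco Hmax Hattain Hmin Hattain' using hchoice
  set Φ : Finset (Fin 7) → Plane := fun S => q + (cf S)⁻¹ • dir (βf S) with hΦ
  have hΦfr : ∀ S, S ∈ 𝒮 → ∀ i, (Φ S ∈ frontier (C i) ↔ h i (βf S) = cf S) := by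
    intro S hS i
    rw [hΦ]
    show q + (cf S)⁻¹ • dir (βf S) ∈ frontier (C i) ↔ _
    rw [hfr i, hsmul i _ _ (inv_nonneg.2 (Hpos S hS).le)]
    show (cf S)⁻¹ * h i (βf S) = 1 ↔ _
    rw [inv_mul_eq_one₀ (Hpos S hS).ne']
    exact eq_comm
  have himg : ∀ S, S ∈ 𝒮 → Φ S ∈ Vfin := by
    intro S hS
    obtain ⟨i, hiS, hieq⟩ := Hattain S hS
    obtain ⟨j, hjS, hjeq⟩ := Hattain' S hS
    have hij : i ≠ j := fun he => hjS (he ▸ hiS)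
    exact (hVmem _).2 ⟨i, j, hij, (hΦfr S hS i).2 hieq, (hΦfr S hS j).2 hjeq⟩
  -- two members of the same fiber have identical sweep data
  have hsame : ∀ S, S ∈ 𝒮 → ∀ S', S' ∈ 𝒮 → Φ S = Φ S' →
      cf S = cf S' ∧ dir (βf S) = dir (βf S') := by
    intro S hS S' hS' hΦeq
    rw [hΦ] at hΦeq
    have heq : (cf S)⁻¹ • dir (βf S) = (cf S')⁻¹ • dir (βf S') := by
      have := hΦeq
      simpa using this
    have hnorm : (cf S)⁻¹ = (cf S')⁻¹ := by
      have h1 : ‖(cf S)⁻¹ • dir (βf S)‖ = (cf S)⁻¹ := by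
        rw [norm_smul, Real.norm_eq_abs, abs_of_pos (inv_pos.2 (Hpos S hS)), dir_norm, mul_one]
      have h2 : ‖(cf S')⁻¹ • dir (βf S')‖ = (cf S')⁻¹ := by
        rw [norm_smul, Real.norm_eq_abs, abs_of_pos (inv_pos.2 (Hpos S' hS')), dir_norm, mul_one]
      rw [← h1, ← h2, heq]
    have hc : cf S = cf S' := inv_injective hnorm
    refine ⟨hc, ?_⟩
    rw [hc] at heq
    exact smul_right_injective Plane (inv_ne_zero (Hpos S' hS').ne') heq
  have hvals : ∀ S, S ∈ 𝒮 → ∀ S', S' ∈ 𝒮 → Φ S = Φ S' →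
      ∀ i, h i (βf S) = h i (βf S') := by
    intro S hS S' hS' hΦeq i
    show g i (dir (βf S)) = g i (dir (βf S'))
    rw [(hsame S hS S' hS' hΦeq).2]
  have hchain : ∀ S, S ∈ 𝒮 → ∀ S', S' ∈ 𝒮 → Φ S = Φ S' → S ⊆ S' ∨ S' ⊆ S := by
    intro S hS S' hS' hΦeq
    obtain ⟨k, hk⟩ := dir_eq_angle (hsame S hS S' hS' hΦeq).2
    set t := max (t0f S) (t0f S' - k * (2 * Real.pi)) with ht
    have ht1 : t < βf S := by
      rw [ht]
      refine max_lt (Hgt S hS) ?_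
      have := Hgt S' hS'
      linarith [hk]
    have hRzS : ∀ i ∈ S, ∀ j, j ∉ S → h i t < h j t :=
      HIco S hS t (le_max_left _ _) ht1
    have hRzS' : ∀ i ∈ S', ∀ j, j ∉ S' → h i t < h j t := by
      intro i hi j hj
      have h1 : t0f S' ≤ t + k * (2 * Real.pi) := by
        have := le_max_right (t0f S) (t0f S' - k * (2 * Real.pi))
        rw [← ht] at this
        linarith
      have h2 : t + k * (2 * Real.pi) < βf S' := by
        rw [hk]
        linarith
      have := HIco S' hS' (t + k * (2 * Real.pi)) h1 h2 i hi j hj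
      rwa [hhper, hhper] at this
    by_contra hc
    push_neg at hc
    obtain ⟨hns, hns'⟩ := hc
    obtain ⟨a, haS, haS'⟩ := Finset.not_subset.1 hns
    obtain ⟨b, hbS', hbS⟩ := Finset.not_subset.1 hns'
    have h1 := hRzS a haS b hbS
    have h2 := hRzS' b hbS' a haS'
    linarith
  -- fiber cardinality bound
  have hfibercard : ∀ v ∈ 𝒮.image Φ, (𝒮.filter fun S => Φ S = v).card ≤ tdeg v - 1 := by
    intro v hv
    set Bv := Finset.univ.filter (fun i : Fin 7 => v ∈ frontier (C i)) with hBv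
    set Fib := 𝒮.filter (fun S => Φ S = v) with hFib
    have hFib𝒮 : ∀ S ∈ Fib, S ∈ 𝒮 ∧ Φ S = v := fun S hS => Finset.mem_filter.1 hS
    have hmemB : ∀ S ∈ Fib, ∀ i, (i ∈ Bv ↔ h i (βf S) = cf S) := by
      intro S hS i
      obtain ⟨hS𝒮, hSv⟩ := hFib𝒮 S hS
      rw [hBv, Finset.mem_filter]
      simp only [Finset.mem_univ, true_and]
      rw [← hSv]
      exact hΦfr S hS𝒮 i
    have hSrep : ∀ S ∈ Fib, ∀ i, (i ∈ S ↔ (i ∈ S ∩ Bv ∨ h i (βf S) < cf S)) := by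
      intro S hS i
      obtain ⟨hS𝒮, hSv⟩ := hFib𝒮 S hS
      constructor
      · intro hiS
        rcases lt_or_eq_of_le (Hmax S hS𝒮 i hiS) with hlt | heq
        · exact Or.inr hlt
        · exact Or.inl (Finset.mem_inter.2 ⟨hiS, (hmemB S hS i).2 heq⟩)
      · rintro (hi | hlt)
        · exact (Finset.mem_inter.1 hi).1
        · by_contra hiS
          exact absurd (Hmin S hS𝒮 i hiS) (not_le.2 hlt)
    have hinj : Set.InjOn (fun S => S ∩ Bv) (Fib : Set (Finset (Fin 7))) := by
      intro S hS S' hS' heq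
      rw [Finset.mem_coe] at hS hS'
      obtain ⟨hS𝒮, hSv⟩ := hFib𝒮 S hS
      obtain ⟨hS'𝒮, hS'v⟩ := hFib𝒮 S' hS'
      have hΦeq : Φ S = Φ S' := by rw [hSv, hS'v]
      have hcc := (hsame S hS𝒮 S' hS'𝒮 hΦeq).1
      have hvv := hvals S hS𝒮 S' hS'𝒮 hΦeq
      ext i
      rw [hSrep S hS i, hSrep S' hS' i]
      simp only [heq]
      rw [hvv i, hcc]
    have hcard1 : Fib.card = (Fib.image (fun S => S ∩ Bv)).card :=
      (Finset.card_image_of_injOn hinj).symm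
    have hAB : ∀ A ∈ Fib.image (fun S => S ∩ Bv), A ⊆ Bv ∧ A.Nonempty ∧ A ≠ Bv := by
      intro A hA
      obtain ⟨S, hSF, rfl⟩ := Finset.mem_image.1 hA
      obtain ⟨hS𝒮, hSv⟩ := hFib𝒮 S hSF
      refine ⟨Finset.inter_subset_right, ?_, ?_⟩
      · obtain ⟨i, hiS, hieq⟩ := Hattain S hS𝒮
        exact ⟨i, Finset.mem_inter.2 ⟨hiS, (hmemB S hSF i).2 hieq⟩⟩
      · obtain ⟨j, hjS, hjeq⟩ := Hattain' S hS𝒮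
        intro hAB
        have hjB : j ∈ Bv := (hmemB S hSF j).2 hjeq
        rw [← hAB] at hjB
        exact hjS (Finset.mem_inter.1 hjB).1
    have hchainA : ∀ A ∈ Fib.image (fun S => S ∩ Bv), ∀ A' ∈ Fib.image (fun S => S ∩ Bv),
        A ⊆ A' ∨ A' ⊆ A := by
      intro A hA A' hA'
      obtain ⟨S, hSF, rfl⟩ := Finset.mem_image.1 hA
      obtain ⟨S', hS'F, rfl⟩ := Finset.mem_image.1 hA'
      obtain ⟨hS𝒮, hSv⟩ := hFib𝒮 S hSF
      obtain ⟨hS'𝒮, hS'v⟩ := hFib𝒮 S' hS'F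
      rcases hchain S hS𝒮 S' hS'𝒮 (by rw [hSv, hS'v]) with hss | hss
      · exact Or.inl (Finset.inter_subset_inter hss (Finset.Subset.refl _))
      · exact Or.inr (Finset.inter_subset_inter hss (Finset.Subset.refl _))
    have hcc := chain_card_aux Bv (Fib.image (fun S => S ∩ Bv)) hAB hchainA
    have h4 : tdeg v = Bv.card := by rw [htdeg, hBv]
    omega
  -- total count
  have hcount : (126 : ℕ) ≤ ∑ v ∈ Vfin, (tdeg v - 1) := by
    have h1 := Finset.card_eq_sum_card_image Φ 𝒮
    have h2 : ∑ v ∈ 𝒮.image Φ, (𝒮.filter fun S => Φ S = v).card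
        ≤ ∑ v ∈ 𝒮.image Φ, (tdeg v - 1) := Finset.sum_le_sum hfibercard
    have h3 : ∑ v ∈ 𝒮.image Φ, (tdeg v - 1) ≤ ∑ v ∈ Vfin, (tdeg v - 1) := by
      refine Finset.sum_le_sum_of_subset ?_
      intro v hv
      obtain ⟨S, hS, rfl⟩ := Finset.mem_image.1 hv
      exact himg S hS
    omega
  -- double counting with the six-point bound
  have hpair : ∀ i j : Fin 7, i ≠ j →
      (Vfin.filter fun v => v ∈ frontier (C i) ∧ v ∈ frontier (C j)).card ≤ 6 := by
    intro i j hij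
    have hsub : (Vfin.filter fun v => v ∈ frontier (C i) ∧ v ∈ frontier (C j))
        ⊆ (hPF i j hij).toFinset := by
      intro v hv
      obtain ⟨-, h1, h2⟩ := Finset.mem_filter.1 hv
      rw [Set.Finite.mem_toFinset]
      exact ⟨h1, h2⟩
    refine le_trans (Finset.card_le_card hsub) ?_
    rw [← Set.ncard_eq_toFinset_card _ (hPF i j hij)]
    exact pair_frontier_ncard_le_six (hTri i) (hTri j) (hPF i j hij)
  have hdouble : ∑ v ∈ Vfin, tdeg v * (tdeg v - 1) ≤ 252 := by
    have hterm : ∀ v : Plane, tdeg v * (tdeg v - 1)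
        = ∑ ij ∈ (Finset.univ.offDiag : Finset (Fin 7 × Fin 7)),
          (if v ∈ frontier (C ij.1) ∧ v ∈ frontier (C ij.2) then 1 else 0) := by
      intro v
      rw [← Finset.card_filter]
      have hoff : (Finset.univ.offDiag.filter
            fun ij : Fin 7 × Fin 7 => v ∈ frontier (C ij.1) ∧ v ∈ frontier (C ij.2))
          = (Finset.univ.filter fun i : Fin 7 => v ∈ frontier (C i)).offDiag := by
        ext ⟨i, j⟩
        constructor
        · intro hmem'
          rw [Finset.mem_filter] at hmem'
          obtain ⟨hod, h1, h2⟩ := hmem'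
          rw [Finset.mem_offDiag] at hod
          rw [Finset.mem_offDiag]
          exact ⟨Finset.mem_filter.2 ⟨Finset.mem_univ _, h1⟩,
            Finset.mem_filter.2 ⟨Finset.mem_univ _, h2⟩, hod.2.2⟩
        · intro hmem'
          rw [Finset.mem_offDiag] at hmem'
          obtain ⟨h1, h2, hne⟩ := hmem'
          rw [Finset.mem_filter] at h1
          rw [Finset.mem_filter] at h2
          exact Finset.mem_filter.2
            ⟨Finset.mem_offDiag.2 ⟨Finset.mem_univ _, Finset.mem_univ _, hne⟩, h1.2, h2.2⟩
      rw [hoff, Finset.offDiag_card]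
      have h4 : tdeg v = (Finset.univ.filter fun i : Fin 7 => v ∈ frontier (C i)).card := rfl
      rw [h4]
      generalize (Finset.univ.filter fun i : Fin 7 => v ∈ frontier (C i)).card = n
      cases n with
      | zero => simp
      | succ m =>
        rw [Nat.succ_sub_one, Nat.mul_succ, Nat.add_sub_cancel]
    calc ∑ v ∈ Vfin, tdeg v * (tdeg v - 1)
        = ∑ v ∈ Vfin, ∑ ij ∈ (Finset.univ.offDiag : Finset (Fin 7 × Fin 7)),
            (if v ∈ frontier (C ij.1) ∧ v ∈ frontier (C ij.2) then 1 else 0) :=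
          Finset.sum_congr rfl fun v _ => hterm v
      _ = ∑ ij ∈ (Finset.univ.offDiag : Finset (Fin 7 × Fin 7)), ∑ v ∈ Vfin,
            (if v ∈ frontier (C ij.1) ∧ v ∈ frontier (C ij.2) then 1 else 0) :=
          Finset.sum_comm
      _ = ∑ ij ∈ (Finset.univ.offDiag : Finset (Fin 7 × Fin 7)),
            (Vfin.filter fun v => v ∈ frontier (C ij.1) ∧ v ∈ frontier (C ij.2)).card := by
          refine Finset.sum_congr rfl fun ij _ => ?_
          rw [Finset.card_filter]
      _ ≤ ∑ _ij ∈ (Finset.univ.offDiag : Finset (Fin 7 × Fin 7)), 6 :=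
          Finset.sum_le_sum fun ij hij => hpair ij.1 ij.2 (Finset.mem_offDiag.1 hij).2.2
      _ = 252 := by
          rw [Finset.sum_const, Finset.offDiag_card]
          simp
  -- degree facts
  have hdeg2 : ∀ v ∈ Vfin, 2 ≤ tdeg v := by
    intro v hv
    obtain ⟨i, j, hij, h1, h2⟩ := (hVmem v).1 hv
    rw [htdeg]
    refine Finset.one_lt_card.2 ⟨i, ?_, j, ?_, hij⟩ <;>
      simp [Finset.mem_filter, h1, h2]
  have hp3' : 3 ≤ tdeg p := by
    have hset : {i : Fin 7 | p ∈ frontier (C i)}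
        = ↑(Finset.univ.filter fun i : Fin 7 => p ∈ frontier (C i)) := by
      ext i
      simp
    rw [hset, Set.ncard_coe_finset] at hp3
    rw [htdeg]
    exact hp3
  have hpV : p ∈ Vfin := by
    have h2 : 2 ≤ (Finset.univ.filter fun i : Fin 7 => p ∈ frontier (C i)).card := by
      have h4 : tdeg p = (Finset.univ.filter fun i : Fin 7 => p ∈ frontier (C i)).card := rfl
      omega
    obtain ⟨i, hi, j, hj, hij⟩ := Finset.one_lt_card.1 h2
    rw [Finset.mem_filter] at hi hj
    exact (hVmem p).2 ⟨i, j, hij, hi.2, hj.2⟩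
  -- final arithmetic
  have hA : ∑ v ∈ Vfin, 2 * (tdeg v - 1) + 2 ≤ ∑ v ∈ Vfin, tdeg v * (tdeg v - 1) := by
    rw [← Finset.add_sum_erase Vfin (fun v => 2 * (tdeg v - 1)) hpV,
      ← Finset.add_sum_erase Vfin (fun v => tdeg v * (tdeg v - 1)) hpV]
    have h1 : 2 * (tdeg p - 1) + 2 ≤ tdeg p * (tdeg p - 1) := by
      calc 2 * (tdeg p - 1) + 2 ≤ 3 * (tdeg p - 1) := by omega
      _ ≤ tdeg p * (tdeg p - 1) := Nat.mul_le_mul_right _ hp3'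
    have h2 : ∑ v ∈ Vfin.erase p, 2 * (tdeg v - 1)
        ≤ ∑ v ∈ Vfin.erase p, tdeg v * (tdeg v - 1) :=
      Finset.sum_le_sum fun v hv =>
        Nat.mul_le_mul_right _ (hdeg2 v (Finset.mem_of_mem_erase hv))
    have h3 := Nat.add_le_add h1 h2
    linarith
  have hB : (252 : ℕ) ≤ ∑ v ∈ Vfin, 2 * (tdeg v - 1) := by
    calc (252 : ℕ) = 2 * 126 := rfl
    _ ≤ 2 * ∑ v ∈ Vfin, (tdeg v - 1) := Nat.mul_le_mul_left _ hcount
    _ = ∑ v ∈ Vfin, 2 * (tdeg v - 1) := Finset.mul_sum _ _ _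
  have hfinal : (254 : ℕ) ≤ 252 := by
    calc (254 : ℕ) = 252 + 2 := rfl
    _ ≤ ∑ v ∈ Vfin, 2 * (tdeg v - 1) + 2 := Nat.add_le_add_right hB 2
    _ ≤ ∑ v ∈ Vfin, tdeg v * (tdeg v - 1) := hA
    _ ≤ 252 := hdouble
  exact absurd hfinal (by norm_num)
end
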